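/- Let (μ_t)_{t≥0} be a family of integrable centered probability measures increasing in the MRL order, with integrated survival function C(t,x) = ∫ (y-x)⁺ μ_t(dy). Fix a < b and define μ_t^{a,b}(dy) = 1_{(-∞,a)∪(b,∞)}(y) μ_t(dy) + α_t δ_a(dy) + β_t δ_b(dy), where α_t = (1/(b-a)) ∫_{[a,b]} (b-y) μ_t(dy) and β_t = (1/(b-a)) ∫_{[a,b]} (y-a) μ_t(dy). Then μ_t^{a,b} is a centered probability measure, its integrated survival function equals C^{a,b}(t,x) = ((b-x)/(b-a)) C(t,a) + ((x-a)/(b-a)) C(t,b) for x ∈ [a,b] and C(t,x) otherwise, and the family (μ_t^{a,b})_{t≥0} still increases in the MRL order. -/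

import Mathlib

/-!
Censoring replaces `μ` on `[a, b]` by the two-point laws `((b - y) δ_a + (y - a) δ_b) / (b - a)`,
which have the same mean as `δ_y`. Hence `∫ f d(censor μ)` is `∫ f dμ` with `f` replaced on `[a, b]`
by its secant, which gives the mass, the mean and the integrated survival function of the censored
law. Off `(a, b]` its mean residual life is that of `μ`; on `(a, b]` it is
`x + ((b - x) C(a) + (x - a) C(b)) / (C(a) - C(b))`, and comparing two times amounts to the TP₂
inequality `C₂(a) C₁(b) ≤ C₁(a) C₂(b)`. That inequality follows from the MRL order written as
`C₁ G₂ ≤ C₂ G₁`, where `G(u) = μ[u, ∞) = -C'(u)`: the function `ψ = C₂ C₁(b) - C₁ C₂(b)` vanishes at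
`b` and satisfies `-ψ' ≤ (G₁ / C₁) ψ`, so a Grönwall argument gives `ψ(a) ≤ 0`.
-/

open MeasureTheory Set

lemma setIntegral_Ioc_sub_pow {x b : ℝ} (hxb : x ≤ b) (n : ℕ) :
    ∫ u in Ioc x b, (b - u) ^ n = (b - x) ^ (n + 1) / (n + 1) := by
  rw [← intervalIntegral.integral_of_le hxb,
    intervalIntegral.integral_comp_sub_left (fun u => u ^ n), sub_self, integral_pow]
  simp

theorem nonpos_of_eq_setIntegral_Ioc {ψ φ : ℝ → ℝ} {a b K : ℝ} (hK : 0 ≤ K)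
    (hφ : IntegrableOn φ (Ioc a b)) (hψ : ∀ x ∈ Icc a b, ψ x = ∫ u in Ioc x b, φ u)
    (hφψ : ∀ u ∈ Icc a b, φ u ≤ K * max (ψ u) 0) : ∀ x ∈ Icc a b, ψ x ≤ 0 := by
  set M := ∫ u in Ioc a b, |φ u|
  have hM : 0 ≤ M := setIntegral_nonneg measurableSet_Ioc fun _ _ => abs_nonneg _
  have hbound : ∀ n : ℕ, ∀ x ∈ Icc a b, max (ψ x) 0 ≤ M * (K * (b - x)) ^ n / n.factorial := by
    intro n
    induction n with
    | zero =>
      intro x hx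
      rw [pow_zero, Nat.factorial_zero, Nat.cast_one, mul_one, div_one, hψ x hx]
      refine max_le ?_ hM
      calc ∫ u in Ioc x b, φ u ≤ ∫ u in Ioc x b, |φ u| :=
            setIntegral_mono_on (hφ.mono_set (Ioc_subset_Ioc_left hx.1))
              (IntegrableOn.mono_set hφ.abs (Ioc_subset_Ioc_left hx.1)) measurableSet_Ioc
              fun u _ => le_abs_self _
        _ ≤ M := setIntegral_mono_set hφ.abs (Filter.Eventually.of_forall fun _ => abs_nonneg _)
            (Filter.Eventually.of_forall (Ioc_subset_Ioc_left hx.1))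
    | succ n ih =>
      intro x hx
      have hbx : 0 ≤ b - x := sub_nonneg.mpr hx.2
      refine max_le ?_ (by positivity)
      rw [hψ x hx]
      calc ∫ u in Ioc x b, φ u ≤ ∫ u in Ioc x b, K * (M * (K * (b - u)) ^ n / n.factorial) :=
            setIntegral_mono_on (hφ.mono_set (Ioc_subset_Ioc_left hx.1))
              (Continuous.integrableOn_Ioc (by fun_prop)) measurableSet_Ioc fun u hu =>
                (hφψ u ⟨hx.1.trans hu.1.le, hu.2⟩).trans
                  (mul_le_mul_of_nonneg_left (ih u ⟨hx.1.trans hu.1.le, hu.2⟩) hK)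
        _ = K * (M * K ^ n / n.factorial) * ∫ u in Ioc x b, (b - u) ^ n := by
            rw [← integral_const_mul]
            congr 1 with u
            rw [mul_pow]
            ring
        _ = M * (K * (b - x)) ^ (n + 1) / (n + 1).factorial := by
            rw [setIntegral_Ioc_sub_pow hx.2, Nat.factorial_succ]
            push_cast
            field_simp
            rw [mul_pow]
            ring
  intro x hx
  have htend := (FloorSemiring.tendsto_pow_div_factorial_atTop (K * (b - x))).const_mul M
  rw [mul_zero] at htend
  have hmax : max (ψ x) 0 ≤ 0 :=
    ge_of_tendsto' htend fun n => (hbound n x hx).trans_eq (mul_div_assoc _ _ _)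
  exact (le_max_left _ _).trans hmax

noncomputable def integratedSurvival (μ : Measure ℝ) (x : ℝ) : ℝ :=
  ∫ y, max (y - x) 0 ∂μ

/-- For `μ [x, ∞) = 0` the junk value `C / 0 = 0` makes this `x`. -/
noncomputable def meanResidualLife (μ : Measure ℝ) (x : ℝ) : ℝ :=
  x + integratedSurvival μ x / μ.real (Ici x)

section IntegratedSurvival

variable {μ μ₁ μ₂ : Measure ℝ} {a b x : ℝ}

lemma integrable_max_sub [IsFiniteMeasure μ] (hμ : Integrable (fun y : ℝ => y) μ) (x : ℝ) :
    Integrable (fun y => max (y - x) 0) μ :=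
  (hμ.sub (integrable_const x)).pos_part

lemma integratedSurvival_nonneg (μ : Measure ℝ) (x : ℝ) : 0 ≤ integratedSurvival μ x :=
  integral_nonneg fun _ => le_max_right _ _

lemma setIntegral_Ici_sub_eq_integratedSurvival (μ : Measure ℝ) (x : ℝ) :
    ∫ y in Ici x, (y - x) ∂μ = integratedSurvival μ x := by
  rw [integratedSurvival, ← integral_indicator measurableSet_Ici]
  congr 1 with y
  by_cases h : x ≤ y
  · simp [h]
  · simp [indicator_of_notMem (notMem_Ici.mpr (not_le.mp h)), (not_le.mp h).le]

lemma integratedSurvival_eq_zero_of_measureReal_Ici [IsFiniteMeasure μ]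
    (h : μ.real (Ici x) = 0) : integratedSurvival μ x = 0 := by
  rw [← setIntegral_Ici_sub_eq_integratedSurvival,
    Measure.restrict_eq_zero.mpr ((measureReal_eq_zero_iff).mp h), integral_zero_measure]

lemma integratedSurvival_sub_eq_setIntegral [IsFiniteMeasure μ]
    (hμ : Integrable (fun y : ℝ => y) μ) (hxb : x ≤ b) :
    integratedSurvival μ x - integratedSurvival μ b = ∫ u in Ioc x b, μ.real (Ici u) := by
  have hf : Integrable (fun y => max (y - x) 0 - max (y - b) 0) μ :=
    (integrable_max_sub hμ x).sub (integrable_max_sub hμ b)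
  have hlevel : ∀ t ∈ Ioc 0 (b - x),
      μ.real {y | t ≤ max (y - x) 0 - max (y - b) 0} = μ.real (Ici (x + t)) := by
    intro t ht
    congr 1 with y
    simp only [mem_ofPred_eq, mem_Ici, mem_Ioc] at ht ⊢
    constructor <;> intro h
    · by_contra! hy
      rw [max_eq_right (by linarith : y - b ≤ 0)] at h
      have := max_lt (by linarith : y - x < t) ht.1
      linarith
    · rw [max_eq_left (by linarith : 0 ≤ y - x)]
      rcases le_total y b with hyb | hyb
      · rw [max_eq_right (by linarith : y - b ≤ 0)]; linarith
      · rw [max_eq_left (by linarith : 0 ≤ y - b)]; linarith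
  rw [integratedSurvival, integratedSurvival, ← integral_sub (integrable_max_sub hμ x)
      (integrable_max_sub hμ b),
    hf.integral_eq_integral_Ioc_meas_le (M := b - x)
      (Filter.Eventually.of_forall fun y => ?_) (Filter.Eventually.of_forall fun y => ?_),
    setIntegral_congr_fun measurableSet_Ioc hlevel,
    ← intervalIntegral.integral_of_le (by linarith), ← intervalIntegral.integral_of_le hxb,
    intervalIntegral.integral_comp_add_left (fun u => μ.real (Ici u)), add_zero, add_sub_cancel]
  · simp only [Pi.zero_apply, sub_nonneg]
    exact max_le_max (by linarith) le_rfl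
  · dsimp only
    rcases le_total y b with hyb | hyb
    · rw [max_eq_right (by linarith : y - b ≤ 0), sub_zero]
      exact max_le (by linarith) (by linarith)
    · rw [max_eq_left (by linarith : 0 ≤ y - b), max_eq_left (by linarith : 0 ≤ y - x)]
      linarith

lemma integratedSurvival_antitone [IsFiniteMeasure μ] (hμ : Integrable (fun y : ℝ => y) μ) :
    Antitone (integratedSurvival μ) := fun _ _ hxy =>
  sub_nonneg.mp ((integratedSurvival_sub_eq_setIntegral hμ hxy).symm ▸
    setIntegral_nonneg measurableSet_Ioc fun _ _ => measureReal_nonneg)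

lemma integrableOn_measureReal_Ici [IsFiniteMeasure μ] (a b : ℝ) :
    IntegrableOn (fun u => μ.real (Ici u)) (Ioc a b) :=
  (AntitoneOn.integrableOn_isCompact isCompact_Icc fun _ _ _ _ huv =>
    measureReal_mono (Ici_subset_Ici.mpr huv)).mono_set Ioc_subset_Icc_self

theorem integratedSurvival_tp2 [IsFiniteMeasure μ₁] [IsFiniteMeasure μ₂]
    (h₁ : Integrable (fun y : ℝ => y) μ₁) (h₂ : Integrable (fun y : ℝ => y) μ₂) (hab : a ≤ b)
    (hratio : ∀ u ∈ Icc a b,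
      integratedSurvival μ₁ u * μ₂.real (Ici u) ≤ integratedSurvival μ₂ u * μ₁.real (Ici u)) :
    integratedSurvival μ₂ a * integratedSurvival μ₁ b
      ≤ integratedSurvival μ₁ a * integratedSurvival μ₂ b := by
  rcases (integratedSurvival_nonneg μ₁ b).eq_or_lt with hB₁ | hB₁
  · rw [← hB₁, mul_zero]
    exact mul_nonneg (integratedSurvival_nonneg _ _) (integratedSurvival_nonneg _ _)
  set B₁ := integratedSurvival μ₁ b
  set B₂ := integratedSurvival μ₂ b
  set ψ := fun x => integratedSurvival μ₂ x * B₁ - integratedSurvival μ₁ x * B₂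
  set φ := fun u => B₁ * μ₂.real (Ici u) - B₂ * μ₁.real (Ici u)
  have hψ : ∀ x ∈ Icc a b, ψ x = ∫ u in Ioc x b, φ u := by
    intro x hx
    rw [integral_sub ((integrableOn_measureReal_Ici x b).const_mul B₁)
        ((integrableOn_measureReal_Ici x b).const_mul B₂), integral_const_mul, integral_const_mul,
      ← integratedSurvival_sub_eq_setIntegral h₁ hx.2,
      ← integratedSurvival_sub_eq_setIntegral h₂ hx.2]
    ring
  have hφψ : ∀ u ∈ Icc a b, φ u ≤ μ₁.real univ / B₁ * max (ψ u) 0 := by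
    intro u hu
    have hC₁ : B₁ ≤ integratedSurvival μ₁ u := integratedSurvival_antitone h₁ hu.2
    have hG₁ : 0 ≤ μ₁.real (Ici u) := measureReal_nonneg
    have hlin : integratedSurvival μ₁ u * φ u ≤ μ₁.real (Ici u) * ψ u := by
      simp only [φ, ψ]
      nlinarith [hratio u hu]
    have hmass : μ₁.real (Ici u) * ψ u ≤ μ₁.real univ * max (ψ u) 0 :=
      (mul_le_mul_of_nonneg_left (le_max_left _ _) hG₁).trans
        (mul_le_mul_of_nonneg_right (measureReal_mono (subset_univ _)) (le_max_right _ _))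
    rw [div_mul_eq_mul_div, le_div_iff₀ hB₁]
    rcases le_or_gt (φ u) 0 with hφ | hφ
    · exact (mul_nonpos_of_nonpos_of_nonneg hφ hB₁.le).trans
        (mul_nonneg measureReal_nonneg (le_max_right _ _))
    · calc φ u * B₁ ≤ integratedSurvival μ₁ u * φ u := by
            rw [mul_comm]; exact mul_le_mul_of_nonneg_right hC₁ hφ.le
        _ ≤ μ₁.real univ * max (ψ u) 0 := hlin.trans hmass
  have hψa := nonpos_of_eq_setIntegral_Ioc (div_nonneg measureReal_nonneg hB₁.le)
    ((integrableOn_measureReal_Ici a b).const_mul B₁ |>.sub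
      ((integrableOn_measureReal_Ici a b).const_mul B₂)) hψ hφψ a ⟨le_rfl, hab⟩
  simp only [ψ] at hψa
  linarith [mul_comm (integratedSurvival μ₁ a) B₂]

lemma integratedSurvival_eq_zero_of_eq [IsFiniteMeasure μ] (hμ : Integrable (fun y : ℝ => y) μ)
    (hab : a < b) (h : integratedSurvival μ a = integratedSurvival μ b) :
    integratedSurvival μ b = 0 := by
  have hmass : (b - a) * μ.real (Ici b) ≤ 0 := by
    calc (b - a) * μ.real (Ici b) = ∫ _ in Ioc a b, μ.real (Ici b) := by
          rw [setIntegral_const, smul_eq_mul, Real.volume_real_Ioc_of_le hab.le]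
      _ ≤ ∫ u in Ioc a b, μ.real (Ici u) :=
          setIntegral_mono_on (integrableOn_const measure_Ioc_lt_top.ne)
            (integrableOn_measureReal_Ici a b)
            measurableSet_Ioc fun _ hu => measureReal_mono (Ici_subset_Ici.mpr hu.2)
      _ = 0 := by rw [← integratedSurvival_sub_eq_setIntegral hμ hab.le, h, sub_self]
  exact integratedSurvival_eq_zero_of_measureReal_Ici <| le_antisymm
    (nonpos_of_mul_nonpos_right hmass (sub_pos.mpr hab)) measureReal_nonneg

end IntegratedSurvival

section MeanResidualLife

variable {μ₁ μ₂ : Measure ℝ} {x : ℝ}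

lemma ite_eq_meanResidualLife (μ : Measure ℝ) (x : ℝ) :
    (if μ (Ici x) ≠ 0 then x + (∫ y in Ici x, (y - x) ∂μ) / (μ (Ici x)).toReal else x)
      = meanResidualLife μ x := by
  rw [meanResidualLife, setIntegral_Ici_sub_eq_integratedSurvival, measureReal_def]
  split_ifs with h
  · rfl
  · rw [not_not.mp h, ENNReal.toReal_zero, div_zero, add_zero]

lemma integratedSurvival_mul_le_of_meanResidualLife_le [IsFiniteMeasure μ₁]
    (h : meanResidualLife μ₁ x ≤ meanResidualLife μ₂ x) :
    integratedSurvival μ₁ x * μ₂.real (Ici x) ≤ integratedSurvival μ₂ x * μ₁.real (Ici x) := by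
  have h' := le_of_add_le_add_left h
  rcases measureReal_nonneg.eq_or_lt with hG₁ | hG₁
  · rw [integratedSurvival_eq_zero_of_measureReal_Ici hG₁.symm, zero_mul]
    exact mul_nonneg (integratedSurvival_nonneg _ _) measureReal_nonneg
  rcases measureReal_nonneg.eq_or_lt with hG₂ | hG₂
  · rw [← hG₂, mul_zero]
    exact mul_nonneg (integratedSurvival_nonneg _ _) measureReal_nonneg
  exact (div_le_div_iff₀ hG₁ hG₂).mp h'

lemma integratedSurvival_eq_zero_of_meanResidualLife_le [IsFiniteMeasure μ₁]
    (h : meanResidualLife μ₁ x ≤ meanResidualLife μ₂ x) (h₂ : integratedSurvival μ₂ x = 0) :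
    integratedSurvival μ₁ x = 0 := by
  have h' := le_of_add_le_add_left h
  rw [h₂, zero_div] at h'
  rcases measureReal_nonneg.eq_or_lt with hG₁ | hG₁
  · exact integratedSurvival_eq_zero_of_measureReal_Ici hG₁.symm
  · exact le_antisymm ((div_le_iff₀ hG₁).mp h' |>.trans_eq (zero_mul _))
      (integratedSurvival_nonneg _ _)

end MeanResidualLife

noncomputable def censor (μ : Measure ℝ) (a b : ℝ) : Measure ℝ :=
  μ.restrict (Iio a ∪ Ioi b) +
    ENNReal.ofReal ((b - a)⁻¹ * ∫ y in Icc a b, (b - y) ∂μ) • Measure.dirac a +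
    ENNReal.ofReal ((b - a)⁻¹ * ∫ y in Icc a b, (y - a) ∂μ) • Measure.dirac b

open Classical in
noncomputable def secantOn (a b : ℝ) (f : ℝ → ℝ) : ℝ → ℝ :=
  (Icc a b).piecewise (fun y => ((b - y) * f a + (y - a) * f b) / (b - a)) f

lemma compl_Icc_eq (a b : ℝ) : (Icc a b)ᶜ = Iio a ∪ Ioi b := by
  ext y
  simp only [mem_compl_iff, mem_Icc, not_and_or, not_le, mem_union, mem_Iio, mem_Ioi]

section Censor

variable {μ : Measure ℝ} {a b x : ℝ}

instance isFiniteMeasure_censor [IsFiniteMeasure μ] : IsFiniteMeasure (censor μ a b) := by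
  unfold censor
  constructor
  simp [measure_lt_top]

theorem integral_censor [IsFiniteMeasureOnCompacts μ] (hab : a ≤ b) {f : ℝ → ℝ}
    (hf : Integrable f μ) :
    ∫ y, f y ∂(censor μ a b) = ∫ y, secantOn a b f y ∂μ := by
  have hα : 0 ≤ (b - a)⁻¹ * ∫ y in Icc a b, (b - y) ∂μ :=
    mul_nonneg (inv_nonneg.mpr (sub_nonneg.mpr hab))
      (setIntegral_nonneg measurableSet_Icc fun _ hy => sub_nonneg.mpr hy.2)
  have hβ : 0 ≤ (b - a)⁻¹ * ∫ y in Icc a b, (y - a) ∂μ :=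
    mul_nonneg (inv_nonneg.mpr (sub_nonneg.mpr hab))
      (setIntegral_nonneg measurableSet_Icc fun _ hy => sub_nonneg.mpr hy.1)
  have hdirac : ∀ c, Integrable f (Measure.dirac c) := fun c => integrable_dirac enorm_lt_top
  have hsecant : ∫ y in Icc a b, ((b - y) * f a + (y - a) * f b) / (b - a) ∂μ
      = (b - a)⁻¹ * (∫ y in Icc a b, (b - y) ∂μ) * f a
        + (b - a)⁻¹ * (∫ y in Icc a b, (y - a) ∂μ) * f b := by
    have hlin : ∀ y, ((b - y) * f a + (y - a) * f b) / (b - a)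
        = (b - a)⁻¹ * f a * (b - y) + (b - a)⁻¹ * f b * (y - a) := fun y => by ring
    simp_rw [hlin]
    rw [integral_add (Continuous.integrableOn_Icc (by fun_prop))
        (Continuous.integrableOn_Icc (by fun_prop)), integral_const_mul, integral_const_mul]
    ring
  rw [secantOn, integral_piecewise measurableSet_Icc (Continuous.integrableOn_Icc (by fun_prop))
      hf.integrableOn, compl_Icc_eq, censor,
    integral_add_measure (hf.restrict.add_measure ((hdirac a).smul_measure ENNReal.ofReal_ne_top))
      ((hdirac b).smul_measure ENNReal.ofReal_ne_top),
    integral_add_measure hf.restrict ((hdirac a).smul_measure ENNReal.ofReal_ne_top),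
    integral_smul_measure, integral_smul_measure, integral_dirac, integral_dirac,
    ENNReal.toReal_ofReal hα, ENNReal.toReal_ofReal hβ, hsecant, smul_eq_mul, smul_eq_mul]
  ring

lemma secantOn_apply_of_mem (f : ℝ → ℝ) {y : ℝ} (hy : y ∈ Icc a b) :
    secantOn a b f y = ((b - y) * f a + (y - a) * f b) / (b - a) :=
  piecewise_eq_of_mem _ _ _ hy

lemma secantOn_apply_of_notMem (f : ℝ → ℝ) {y : ℝ} (hy : y ∉ Icc a b) :
    secantOn a b f y = f y :=
  piecewise_eq_of_notMem _ _ _ hy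

lemma secantOn_eq_self_of_affine (hab : a < b) {f : ℝ → ℝ} {p q : ℝ}
    (hf : ∀ y ∈ Icc a b, f y = p * y + q) : secantOn a b f = f := by
  ext y
  by_cases hy : y ∈ Icc a b
  · rw [secantOn_apply_of_mem f hy, hf a ⟨le_rfl, hab.le⟩, hf b ⟨hab.le, le_rfl⟩, hf y hy]
    field_simp [(sub_pos.mpr hab).ne']
    ring
  · exact secantOn_apply_of_notMem f hy

lemma secantOn_max_sub_of_mem (hab : a < b) (hx : x ∈ Icc a b) :
    secantOn a b (fun y => max (y - x) 0)
      = fun y => ((b - x) * max (y - a) 0 + (x - a) * max (y - b) 0) / (b - a) := by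
  ext y
  have hba : b - a ≠ 0 := (sub_pos.mpr hab).ne'
  by_cases hy : y ∈ Icc a b
  · rw [secantOn_apply_of_mem _ hy, max_eq_right (by linarith [hx.1] : a - x ≤ 0),
      max_eq_left (by linarith [hx.2] : 0 ≤ b - x), max_eq_left (by linarith [hy.1] : 0 ≤ y - a),
      max_eq_right (by linarith [hy.2] : y - b ≤ 0)]
    ring
  · rw [secantOn_apply_of_notMem _ hy]
    rcases not_and_or.mp hy with hy | hy <;> rw [not_le] at hy
    · rw [max_eq_right (by linarith [hx.1]), max_eq_right (by linarith),
        max_eq_right (by linarith)]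
      ring
    · rw [max_eq_left (by linarith [hx.2]), max_eq_left (by linarith),
        max_eq_left (by linarith)]
      field_simp
      ring

lemma secantOn_max_sub_of_notMem (hab : a < b) (hx : x ∉ Ioo a b) :
    secantOn a b (fun y => max (y - x) 0) = fun y => max (y - x) 0 := by
  rcases not_and_or.mp hx with hx | hx <;> rw [not_lt] at hx
  · exact secantOn_eq_self_of_affine hab (p := 1) (q := -x) fun y hy => by
      rw [max_eq_left (by linarith [hy.1])]; ring
  · exact secantOn_eq_self_of_affine hab (p := 0) (q := 0) fun y hy => by
      rw [max_eq_right (by linarith [hy.2])]; ring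

lemma secantOn_indicator_Ici_of_notMem (hab : a < b) (hx : x ∉ Ioc a b) :
    secantOn a b ((Ici x).indicator 1) = (Ici x).indicator 1 := by
  rcases not_and_or.mp hx with hx | hx
  · exact secantOn_eq_self_of_affine hab (p := 0) (q := 1) fun y hy => by
      rw [indicator_of_mem (mem_Ici.mpr ((not_lt.mp hx).trans hy.1))]; simp
  · exact secantOn_eq_self_of_affine hab (p := 0) (q := 0) fun y hy => by
      rw [indicator_of_notMem (notMem_Ici.mpr (hy.2.trans_lt (not_le.mp hx)))]; simp

lemma secantOn_indicator_Ici_of_mem (hab : a < b) (hx : x ∈ Ioc a b) :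
    secantOn a b ((Ici x).indicator 1)
      = fun y => (max (y - a) 0 - max (y - b) 0) / (b - a) := by
  ext y
  have hba : b - a ≠ 0 := (sub_pos.mpr hab).ne'
  by_cases hy : y ∈ Icc a b
  · rw [secantOn_apply_of_mem _ hy, indicator_of_notMem (notMem_Ici.mpr hx.1),
      indicator_of_mem (mem_Ici.mpr hx.2), max_eq_left (by linarith [hy.1] : 0 ≤ y - a),
      max_eq_right (by linarith [hy.2] : y - b ≤ 0)]
    simp
  · rw [secantOn_apply_of_notMem _ hy]
    rcases not_and_or.mp hy with hy | hy <;> rw [not_le] at hy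
    · rw [indicator_of_notMem (notMem_Ici.mpr (hy.trans hx.1)), max_eq_right (by linarith),
        max_eq_right (by linarith)]
      simp
    · rw [indicator_of_mem (mem_Ici.mpr (hx.2.trans hy.le)), max_eq_left (by linarith),
        max_eq_left (by linarith)]
      field_simp
      simp

lemma integrable_censor {f : ℝ → ℝ} (hf : Integrable f μ) : Integrable f (censor μ a b) :=
  (hf.restrict.add_measure ((integrable_dirac enorm_lt_top).smul_measure ENNReal.ofReal_ne_top))
    |>.add_measure ((integrable_dirac enorm_lt_top).smul_measure ENNReal.ofReal_ne_top)

theorem isProbabilityMeasure_censor [IsProbabilityMeasure μ] (hab : a < b) :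
    IsProbabilityMeasure (censor μ a b) := by
  have hmass := integral_censor (μ := μ) hab.le (integrable_const (1 : ℝ))
  rw [secantOn_eq_self_of_affine hab (p := 0) (q := 1) fun _ _ => by ring, integral_const,
    integral_const, smul_eq_mul, smul_eq_mul, mul_one, mul_one, probReal_univ (μ := μ)] at hmass
  rw [isProbabilityMeasure_iff, ← ENNReal.ofReal_toReal (measure_ne_top _ univ), ← measureReal_def,
    hmass, ENNReal.ofReal_one]

theorem integral_id_censor [IsFiniteMeasure μ] (hab : a < b) (hμ : Integrable (fun y : ℝ => y) μ) :
    ∫ y, y ∂(censor μ a b) = ∫ y, y ∂μ := by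
  rw [integral_censor hab.le hμ,
    secantOn_eq_self_of_affine hab (p := 1) (q := 0) fun _ _ => by ring]

theorem integratedSurvival_censor_of_mem [IsFiniteMeasure μ] (hab : a < b)
    (hμ : Integrable (fun y : ℝ => y) μ) (hx : x ∈ Icc a b) :
    integratedSurvival (censor μ a b) x
      = (b - x) / (b - a) * integratedSurvival μ a
        + (x - a) / (b - a) * integratedSurvival μ b := by
  rw [integratedSurvival, integral_censor hab.le (integrable_max_sub hμ x),
    secantOn_max_sub_of_mem hab hx]
  simp_rw [add_div, mul_div_right_comm _ (max _ _)]
  rw [integral_add ((integrable_max_sub hμ a).const_mul _) ((integrable_max_sub hμ b).const_mul _),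
    integral_const_mul, integral_const_mul, integratedSurvival, integratedSurvival]

theorem integratedSurvival_censor_of_notMem [IsFiniteMeasure μ] (hab : a < b)
    (hμ : Integrable (fun y : ℝ => y) μ) (hx : x ∉ Ioo a b) :
    integratedSurvival (censor μ a b) x = integratedSurvival μ x := by
  rw [integratedSurvival, integral_censor hab.le (integrable_max_sub hμ x),
    secantOn_max_sub_of_notMem hab hx, integratedSurvival]

lemma integrable_indicator_one_Ici [IsFiniteMeasure μ] (x : ℝ) :
    Integrable ((Ici x).indicator (1 : ℝ → ℝ)) μ :=
  (integrable_const (1 : ℝ)).indicator measurableSet_Ici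

theorem measureReal_censor_Ici_of_notMem [IsFiniteMeasure μ] (hab : a < b) (hx : x ∉ Ioc a b) :
    (censor μ a b).real (Ici x) = μ.real (Ici x) := by
  rw [← integral_indicator_one measurableSet_Ici,
    integral_censor hab.le (integrable_indicator_one_Ici x),
    secantOn_indicator_Ici_of_notMem hab hx, integral_indicator_one measurableSet_Ici]

theorem measureReal_censor_Ici_of_mem [IsFiniteMeasure μ] (hab : a < b)
    (hμ : Integrable (fun y : ℝ => y) μ) (hx : x ∈ Ioc a b) :
    (censor μ a b).real (Ici x) = (integratedSurvival μ a - integratedSurvival μ b) / (b - a) := by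
  rw [← integral_indicator_one measurableSet_Ici,
    integral_censor hab.le (integrable_indicator_one_Ici x),
    secantOn_indicator_Ici_of_mem hab hx, integral_div,
    integral_sub (integrable_max_sub hμ a) (integrable_max_sub hμ b), integratedSurvival,
    integratedSurvival]

theorem meanResidualLife_censor_of_notMem [IsFiniteMeasure μ] (hab : a < b)
    (hμ : Integrable (fun y : ℝ => y) μ) (hx : x ∉ Ioc a b) :
    meanResidualLife (censor μ a b) x = meanResidualLife μ x := by
  rw [meanResidualLife, meanResidualLife, measureReal_censor_Ici_of_notMem hab hx,
    integratedSurvival_censor_of_notMem hab hμ fun h => hx (Ioo_subset_Ioc_self h)]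

theorem meanResidualLife_censor_of_mem [IsFiniteMeasure μ] (hab : a < b)
    (hμ : Integrable (fun y : ℝ => y) μ) (hx : x ∈ Ioc a b) :
    meanResidualLife (censor μ a b) x = x + ((b - x) * integratedSurvival μ a
      + (x - a) * integratedSurvival μ b) / (integratedSurvival μ a - integratedSurvival μ b) := by
  rw [meanResidualLife, measureReal_censor_Ici_of_mem hab hμ hx,
    integratedSurvival_censor_of_mem hab hμ (Ioc_subset_Icc_self hx), div_mul_eq_mul_div,
    div_mul_eq_mul_div, ← add_div, div_div_div_cancel_right₀ (sub_pos.mpr hab).ne']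

end Censor

lemma secant_div_le_secant_div {A₁ B₁ A₂ B₂ a b x : ℝ} (hx : x ∈ Icc a b) (hB₂ : 0 ≤ B₂)
    (hBA₁ : B₁ ≤ A₁) (hBA₂ : B₂ ≤ A₂) (htp2 : A₂ * B₁ ≤ A₁ * B₂) (hdeg : A₂ = B₂ → A₁ = B₁) :
    ((b - x) * A₁ + (x - a) * B₁) / (A₁ - B₁) ≤ ((b - x) * A₂ + (x - a) * B₂) / (A₂ - B₂) := by
  have hbx : 0 ≤ b - x := sub_nonneg.mpr hx.2
  have hxa : 0 ≤ x - a := sub_nonneg.mpr hx.1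
  rcases hBA₁.eq_or_lt with h₁ | h₁
  · rw [h₁, sub_self, div_zero]
    exact div_nonneg (by nlinarith) (sub_nonneg.mpr hBA₂)
  have h₂ : B₂ < A₂ := hBA₂.lt_of_ne fun h => h₁.ne' (hdeg h.symm)
  rw [div_le_div_iff₀ (sub_pos.mpr h₁) (sub_pos.mpr h₂)]
  nlinarith [mul_le_mul_of_nonneg_left htp2 (add_nonneg hbx hxa)]

theorem meanResidualLife_censor_mono {μ₁ μ₂ : Measure ℝ} [IsFiniteMeasure μ₁] [IsFiniteMeasure μ₂]
    (h₁ : Integrable (fun y : ℝ => y) μ₁) (h₂ : Integrable (fun y : ℝ => y) μ₂) {a b : ℝ}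
    (hab : a < b) (hmrl : ∀ u, meanResidualLife μ₁ u ≤ meanResidualLife μ₂ u) (x : ℝ) :
    meanResidualLife (censor μ₁ a b) x ≤ meanResidualLife (censor μ₂ a b) x := by
  by_cases hx : x ∈ Ioc a b
  swap
  · rw [meanResidualLife_censor_of_notMem hab h₁ hx, meanResidualLife_censor_of_notMem hab h₂ hx]
    exact hmrl x
  rw [meanResidualLife_censor_of_mem hab h₁ hx, meanResidualLife_censor_of_mem hab h₂ hx]
  refine add_le_add_right (secant_div_le_secant_div (Ioc_subset_Icc_self hx)
    (integratedSurvival_nonneg μ₂ b) (integratedSurvival_antitone h₁ hab.le)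
    (integratedSurvival_antitone h₂ hab.le)
    (integratedSurvival_tp2 h₁ h₂ hab.le fun u _ =>
      integratedSurvival_mul_le_of_meanResidualLife_le (hmrl u)) fun hdeg => ?_) x
  have hA₂ : integratedSurvival μ₂ a = 0 :=
    hdeg.trans (integratedSurvival_eq_zero_of_eq h₂ hab hdeg)
  have hA₁ := integratedSurvival_eq_zero_of_meanResidualLife_le (hmrl a) hA₂
  exact hA₁.trans (le_antisymm (hA₁ ▸ integratedSurvival_antitone h₁ hab.le)
    (integratedSurvival_nonneg μ₁ b)).symm

/-- Censoring transformation: if `(μ_t)_{t≥0}` is a family of integrable centered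
probability measures increasing in the MRL order with integrated survival function `C`,
and `a < b`, then the censored measures
`μ_t^{a,b} = 1_{(-∞,a)∪(b,∞)} μ_t + α_t δ_a + β_t δ_b` are centered probability measures,
their integrated survival function is the linear interpolation of `C(t,·)` on `[a,b]`
(and `C(t,·)` elsewhere), and the family `(μ_t^{a,b})_{t≥0}` still increases in the
MRL order. -/
theorem censoring_preserves_mrl (μ : ℝ → Measure ℝ)
    (hprob : ∀ t, 0 ≤ t → IsProbabilityMeasure (μ t))
    (hint : ∀ t, 0 ≤ t → Integrable (fun y : ℝ => y) (μ t))
    (hcentered : ∀ t, 0 ≤ t → (∫ y, y ∂(μ t)) = 0)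
    (Ψ : ℝ → ℝ → ℝ)
    (hΨ : ∀ t, 0 ≤ t → ∀ x : ℝ, Ψ t x =
      if μ t (Set.Ici x) ≠ 0 then
        x + (∫ y in Set.Ici x, (y - x) ∂(μ t)) / (μ t (Set.Ici x)).toReal
      else x)
    (hmrl : ∀ t₁ t₂ : ℝ, 0 ≤ t₁ → t₁ ≤ t₂ → ∀ x : ℝ, Ψ t₁ x ≤ Ψ t₂ x)
    (C : ℝ → ℝ → ℝ)
    (hC : ∀ t, 0 ≤ t → ∀ x : ℝ, C t x = ∫ y, max (y - x) 0 ∂(μ t))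
    (a b : ℝ) (hab : a < b)
    (α β : ℝ → ℝ)
    (hα : ∀ t, 0 ≤ t → α t = (b - a)⁻¹ * ∫ y in Set.Icc a b, (b - y) ∂(μ t))
    (hβ : ∀ t, 0 ≤ t → β t = (b - a)⁻¹ * ∫ y in Set.Icc a b, (y - a) ∂(μ t))
    (ν : ℝ → Measure ℝ)
    (hν : ∀ t, 0 ≤ t → ν t =
      (μ t).restrict (Set.Iio a ∪ Set.Ioi b) +
        ENNReal.ofReal (α t) • Measure.dirac a +
        ENNReal.ofReal (β t) • Measure.dirac b)
    (Ψν : ℝ → ℝ → ℝ)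
    (hΨν : ∀ t, 0 ≤ t → ∀ x : ℝ, Ψν t x =
      if ν t (Set.Ici x) ≠ 0 then
        x + (∫ y in Set.Ici x, (y - x) ∂(ν t)) / (ν t (Set.Ici x)).toReal
      else x) :
    (∀ t, 0 ≤ t → IsProbabilityMeasure (ν t) ∧
      Integrable (fun y : ℝ => y) (ν t) ∧ (∫ y, y ∂(ν t)) = 0) ∧
    (∀ t, 0 ≤ t → ∀ x : ℝ,
      (∫ y, max (y - x) 0 ∂(ν t)) =
        if x ∈ Set.Icc a b then
          ((b - x) / (b - a)) * C t a + ((x - a) / (b - a)) * C t b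
        else C t x) ∧
    (∀ t₁ t₂ : ℝ, 0 ≤ t₁ → t₁ ≤ t₂ → ∀ x : ℝ, Ψν t₁ x ≤ Ψν t₂ x) := by
  have hν' : ∀ t, 0 ≤ t → ν t = censor (μ t) a b := fun t ht => by
    rw [hν t ht, hα t ht, hβ t ht]
    rfl
  refine ⟨fun t ht => ?_, fun t ht x => ?_, fun t₁ t₂ ht₁ hle x => ?_⟩
  · have := hprob t ht
    rw [hν' t ht]
    exact ⟨isProbabilityMeasure_censor hab, integrable_censor (hint t ht),
      (integral_id_censor hab (hint t ht)).trans (hcentered t ht)⟩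
  · have := hprob t ht
    rw [hC t ht a, hC t ht b, hC t ht x, hν' t ht]
    split_ifs with hx
    · exact integratedSurvival_censor_of_mem hab (hint t ht) hx
    · exact integratedSurvival_censor_of_notMem hab (hint t ht) fun h => hx (Ioo_subset_Icc_self h)
  · have ht₂ := ht₁.trans hle
    have := hprob t₁ ht₁
    have := hprob t₂ ht₂
    rw [hΨν t₁ ht₁, hΨν t₂ ht₂, ite_eq_meanResidualLife, ite_eq_meanResidualLife, hν' t₁ ht₁,
      hν' t₂ ht₂]
    refine meanResidualLife_censor_mono (hint t₁ ht₁) (hint t₂ ht₂) hab (fun u => ?_) x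
    rw [← ite_eq_meanResidualLife, ← ite_eq_meanResidualLife, ← hΨ t₁ ht₁, ← hΨ t₂ ht₂]
    exact hmrl t₁ t₂ ht₁ hle u
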